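/- arXiv:2408.13635 — 5 statements merged into one kernel-verified Lean document; each statement's English description precedes it below -/
import Mathlib

section
/- Let V, Y1, S1, Y2, S2 be random variables on a common probability space taking values in finite sets, and suppose V and (Y2,S2) are conditionally independent given (Y1,S1) (i.e., the Markov chain V − (Y1,S1) − (Y2,S2) holds). Then [H(V|Y2,S2) − H(V|Y1,S1)]⁺ + H(Y1|Y2,S2,V) = H(Y1,S1|Y2,S2) − H(S1|Y1,Y2,S2,V). (This is the entropy simplification of the achievable secrecy rate R_sec used in the achievability proofs of Theorems 1 and 3 for physically-degraded secure ISAC channels.) -/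
open scoped BigOperators Classical

/-- A probability mass function on a finite type, representing a finite probability space. -/
structure FinPMF (Ω : Type*) [Fintype Ω] where
  p : Ω → ℝ
  nonneg : ∀ ω, 0 ≤ p ω
  sum_one : ∑ ω, p ω = 1

namespace FinPMF

variable {Ω : Type*} [Fintype Ω] (μ : FinPMF Ω)

/-- Probability that the random variable `X` takes the value `x`. -/
def prob {α : Type*} [DecidableEq α] (X : Ω → α) (x : α) : ℝ :=
  ∑ ω, if X ω = x then μ.p ω else 0

/-- Shannon entropy `H(X)` (with the natural logarithm as the fixed base)
of a random variable with values in a finite set. -/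
noncomputable def H {α : Type*} [Fintype α] [DecidableEq α] (X : Ω → α) : ℝ :=
  ∑ x : α, -(μ.prob X x * Real.log (μ.prob X x))

/-- Conditional Shannon entropy `H(X | Y) = H(X, Y) - H(Y)`. -/
noncomputable def condH {α β : Type*} [Fintype α] [DecidableEq α] [Fintype β] [DecidableEq β]
    (X : Ω → α) (Y : Ω → β) : ℝ :=
  μ.H (fun ω => (X ω, Y ω)) - μ.H Y

/-- Mutual information `I(X ; Y) = H(X) + H(Y) - H(X, Y)`. -/
noncomputable def mutInfo {α β : Type*} [Fintype α] [DecidableEq α] [Fintype β] [DecidableEq β]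
    (X : Ω → α) (Y : Ω → β) : ℝ :=
  μ.H X + μ.H Y - μ.H (fun ω => (X ω, Y ω))

/-- The random variables `X` and `Y` are independent. -/
def Indep {α β : Type*} [DecidableEq α] [DecidableEq β] (X : Ω → α) (Y : Ω → β) : Prop :=
  ∀ x y, μ.prob (fun ω => (X ω, Y ω)) (x, y) = μ.prob X x * μ.prob Y y

/-- Markov chain `A − B − C`: the random variables `A` and `C` are conditionally
independent given `B`, expressed multiplicatively as
`P(A=a, B=b, C=c) · P(B=b) = P(A=a, B=b) · P(B=b, C=c)`. -/
def CondIndep {α β γ : Type*} [DecidableEq α] [DecidableEq β] [DecidableEq γ]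
    (A : Ω → α) (B : Ω → β) (C : Ω → γ) : Prop :=
  ∀ a b c,
    μ.prob (fun ω => (A ω, B ω, C ω)) (a, b, c) * μ.prob B b =
      μ.prob (fun ω => (A ω, B ω)) (a, b) * μ.prob (fun ω => (B ω, C ω)) (b, c)


section Marginals

variable {α β γ : Type*} [Fintype α] [DecidableEq α] [Fintype β] [DecidableEq β]
  [Fintype γ] [DecidableEq γ] (A : Ω → α) (B : Ω → β) (C : Ω → γ)

lemma marg_AB (a : α) (b : β) :
    μ.prob (fun ω => (A ω, B ω)) (a, b)
      = ∑ c, μ.prob (fun ω => (A ω, B ω, C ω)) (a, b, c) := by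
  unfold prob
  rw [Finset.sum_comm]
  apply Finset.sum_congr rfl
  intro ω _
  by_cases h : A ω = a ∧ B ω = b
  · simp [Prod.mk.injEq, h.1, h.2, Finset.sum_ite_eq]
  · rw [Finset.sum_eq_zero, if_neg (by simp [Prod.mk.injEq]; tauto)]
    intro c _
    rw [if_neg (by simp [Prod.mk.injEq]; tauto)]

lemma marg_BC (b : β) (c : γ) :
    μ.prob (fun ω => (B ω, C ω)) (b, c)
      = ∑ a, μ.prob (fun ω => (A ω, B ω, C ω)) (a, b, c) := by
  unfold prob
  rw [Finset.sum_comm]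
  apply Finset.sum_congr rfl
  intro ω _
  by_cases h : B ω = b ∧ C ω = c
  · simp [Prod.mk.injEq, h.1, h.2, Finset.sum_ite_eq]
  · rw [Finset.sum_eq_zero, if_neg (by simp [Prod.mk.injEq]; tauto)]
    intro a _
    rw [if_neg (by simp [Prod.mk.injEq]; tauto)]

lemma marg_AC (a : α) (c : γ) :
    μ.prob (fun ω => (A ω, C ω)) (a, c)
      = ∑ b, μ.prob (fun ω => (A ω, B ω, C ω)) (a, b, c) := by
  unfold prob
  rw [Finset.sum_comm]
  apply Finset.sum_congr rfl
  intro ω _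
  by_cases h : A ω = a ∧ C ω = c
  · simp [Prod.mk.injEq, h.1, h.2, Finset.sum_ite_eq]
  · rw [Finset.sum_eq_zero, if_neg (by simp [Prod.mk.injEq]; tauto)]
    intro b _
    rw [if_neg (by simp [Prod.mk.injEq]; tauto)]

lemma marg_B (b : β) :
    μ.prob B b = ∑ a, ∑ c, μ.prob (fun ω => (A ω, B ω, C ω)) (a, b, c) := by
  have step : ∀ a, ∑ c, μ.prob (fun ω => (A ω, B ω, C ω)) (a, b, c)
      = μ.prob (fun ω => (A ω, B ω)) (a, b) := fun a => (marg_AB μ A B C a b).symm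
  simp only [step]
  unfold prob
  rw [Finset.sum_comm]
  apply Finset.sum_congr rfl
  intro ω _
  by_cases h : B ω = b
  · simp [Prod.mk.injEq, h, Finset.sum_ite_eq]
  · rw [Finset.sum_eq_zero, if_neg h]
    intro a _
    rw [if_neg (by simp [Prod.mk.injEq]; tauto)]

lemma marg_C (c : γ) :
    μ.prob C c = ∑ a, ∑ b, μ.prob (fun ω => (A ω, B ω, C ω)) (a, b, c) := by
  have step : ∀ a, ∑ b, μ.prob (fun ω => (A ω, B ω, C ω)) (a, b, c)
      = μ.prob (fun ω => (A ω, C ω)) (a, c) := fun a => (marg_AC μ A B C a c).symm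
  simp only [step]
  unfold prob
  rw [Finset.sum_comm]
  apply Finset.sum_congr rfl
  intro ω _
  by_cases h : C ω = c
  · simp [Prod.mk.injEq, h, Finset.sum_ite_eq]
  · rw [Finset.sum_eq_zero, if_neg h]
    intro a _
    rw [if_neg (by simp [Prod.mk.injEq]; tauto)]

end Marginals

end FinPMF

/-! ### Auxiliary material -/

/-- Entropy of a finite "pmf-like" weight function. -/
noncomputable def ent {α : Type*} [Fintype α] (q : α → ℝ) : ℝ :=
  ∑ x, -(q x * Real.log (q x))

section Core

variable {α β γ : Type*} [Fintype α] [Fintype β] [Fintype γ]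

lemma sum3_comm (f : α → β → γ → ℝ) :
    ∑ a, ∑ b, ∑ c, f a b c = ∑ c, ∑ a, ∑ b, f a b c :=
  calc ∑ a, ∑ b, ∑ c, f a b c
      = ∑ a, ∑ c, ∑ b, f a b c := Finset.sum_congr rfl (fun _ _ => Finset.sum_comm)
    _ = ∑ c, ∑ a, ∑ b, f a b c := Finset.sum_comm

lemma negmul_sum1 {ι : Type*} [Fintype ι] (g : ι → ℝ) (L : ℝ) :
    -((∑ i, g i) * L) = ∑ i, -(g i * L) := by
  rw [Finset.sum_mul, ← Finset.sum_neg_distrib]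

lemma negmul_sum2 {ι κ : Type*} [Fintype ι] [Fintype κ] (g : ι → κ → ℝ) (L : ℝ) :
    -((∑ i, ∑ j, g i j) * L) = ∑ i, ∑ j, -(g i j * L) := by
  rw [Finset.sum_mul, ← Finset.sum_neg_distrib]
  exact Finset.sum_congr rfl fun i _ => negmul_sum1 _ _

theorem ent_markov (q : α × β × γ → ℝ) (hq : ∀ t, 0 ≤ q t)
    (hm : ∀ a b c, q (a,b,c) * (∑ a', ∑ c', q (a',b,c')) =
        (∑ c', q (a,b,c')) * (∑ a', q (a',b,c))) :
    ent q + ent (fun b => ∑ a, ∑ c, q (a,b,c))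
      = ent (fun ab : α × β => ∑ c, q (ab.1, ab.2, c))
        + ent (fun bc : β × γ => ∑ a, q (a, bc.1, bc.2)) := by
  have key : ∀ a b c,
      -(q (a,b,c) * Real.log (q (a,b,c)))
        + -(q (a,b,c) * Real.log (∑ a', ∑ c', q (a',b,c')))
      = -(q (a,b,c) * Real.log (∑ c', q (a,b,c')))
        + -(q (a,b,c) * Real.log (∑ a', q (a',b,c))) := by
    intro a b c
    by_cases h : q (a,b,c) = 0
    · simp [h]
    · have hpos : 0 < q (a,b,c) := lt_of_le_of_ne (hq _) (Ne.symm h)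
      have hAB : 0 < ∑ c', q (a,b,c') :=
        lt_of_lt_of_le hpos (Finset.single_le_sum (f := fun c' => q (a,b,c'))
          (fun i _ => hq _) (Finset.mem_univ c))
      have hBC : 0 < ∑ a', q (a',b,c) :=
        lt_of_lt_of_le hpos (Finset.single_le_sum (f := fun a' => q (a',b,c))
          (fun i _ => hq _) (Finset.mem_univ a))
      have hB : 0 < ∑ a', ∑ c', q (a',b,c') :=
        lt_of_lt_of_le hAB (Finset.single_le_sum
          (f := fun a' => ∑ c', q (a',b,c'))
          (fun i _ => Finset.sum_nonneg fun j _ => hq _) (Finset.mem_univ a))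
      have hlog := congrArg Real.log (hm a b c)
      rw [Real.log_mul (ne_of_gt hpos) (ne_of_gt hB),
        Real.log_mul (ne_of_gt hAB) (ne_of_gt hBC)] at hlog
      linear_combination (-(q (a,b,c))) * hlog
  have eq_q : ent q = ∑ a, ∑ b, ∑ c, -(q (a,b,c) * Real.log (q (a,b,c))) := by
    rw [ent, Fintype.sum_prod_type]
    exact Finset.sum_congr rfl fun a _ => Fintype.sum_prod_type _
  have eq_B : ent (fun b => ∑ a, ∑ c, q (a,b,c))
      = ∑ a, ∑ b, ∑ c, -(q (a,b,c) * Real.log (∑ a', ∑ c', q (a',b,c'))) := by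
    rw [ent]
    calc ∑ b, -((∑ a, ∑ c, q (a,b,c)) * Real.log (∑ a', ∑ c', q (a',b,c')))
        = ∑ b, ∑ a, ∑ c, -(q (a,b,c) * Real.log (∑ a', ∑ c', q (a',b,c'))) :=
          Finset.sum_congr rfl fun b _ => negmul_sum2 _ _
      _ = ∑ a, ∑ b, ∑ c, -(q (a,b,c) * Real.log (∑ a', ∑ c', q (a',b,c'))) :=
          Finset.sum_comm
  have eq_AB : ent (fun ab : α × β => ∑ c, q (ab.1, ab.2, c))
      = ∑ a, ∑ b, ∑ c, -(q (a,b,c) * Real.log (∑ c', q (a,b,c'))) := by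
    rw [ent, Fintype.sum_prod_type]
    exact Finset.sum_congr rfl fun a _ => Finset.sum_congr rfl fun b _ => negmul_sum1 _ _
  have eq_BC : ent (fun bc : β × γ => ∑ a, q (a, bc.1, bc.2))
      = ∑ a, ∑ b, ∑ c, -(q (a,b,c) * Real.log (∑ a', q (a',b,c))) := by
    rw [ent, Fintype.sum_prod_type]
    calc ∑ b, ∑ c, -((∑ a, q (a,b,c)) * Real.log (∑ a', q (a',b,c)))
        = ∑ b, ∑ c, ∑ a, -(q (a,b,c) * Real.log (∑ a', q (a',b,c))) :=
          Finset.sum_congr rfl fun b _ => Finset.sum_congr rfl fun c _ => negmul_sum1 _ _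
      _ = ∑ b, ∑ a, ∑ c, -(q (a,b,c) * Real.log (∑ a', q (a',b,c))) :=
          Finset.sum_congr rfl fun b _ => Finset.sum_comm
      _ = ∑ a, ∑ b, ∑ c, -(q (a,b,c) * Real.log (∑ a', q (a',b,c))) := Finset.sum_comm
  rw [eq_q, eq_B, eq_AB, eq_BC]
  simp only [← Finset.sum_add_distrib]
  exact Finset.sum_congr rfl fun a _ => Finset.sum_congr rfl fun b _ =>
    Finset.sum_congr rfl fun c _ => key a b c

theorem ent_submod (q : α × β × γ → ℝ) (hq : ∀ t, 0 ≤ q t) (h1 : ∑ t, q t = 1) :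
    ent q + ent (fun c => ∑ a, ∑ b, q (a,b,c))
      ≤ ent (fun ac : α × γ => ∑ b, q (ac.1, b, ac.2))
        + ent (fun bc : β × γ => ∑ a, q (a, bc.1, bc.2)) := by
  classical
  set qC : γ → ℝ := fun c => ∑ a, ∑ b, q (a,b,c) with hqC
  set qAC : α → γ → ℝ := fun a c => ∑ b, q (a,b,c) with hqAC
  set qBC : β → γ → ℝ := fun b c => ∑ a, q (a,b,c) with hqBC
  have hqC_nonneg : ∀ c, 0 ≤ qC c := fun c =>
    Finset.sum_nonneg fun a _ => Finset.sum_nonneg fun b _ => hq _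
  have hqAC_nonneg : ∀ a c, 0 ≤ qAC a c := fun a c => Finset.sum_nonneg fun b _ => hq _
  have hqBC_nonneg : ∀ b c, 0 ≤ qBC b c := fun b c => Finset.sum_nonneg fun a _ => hq _
  have hle_AC : ∀ a b c, q (a,b,c) ≤ qAC a c := fun a b c =>
    Finset.single_le_sum (f := fun b' => q (a,b',c)) (fun i _ => hq _) (Finset.mem_univ b)
  have hle_BC : ∀ a b c, q (a,b,c) ≤ qBC b c := fun a b c =>
    Finset.single_le_sum (f := fun a' => q (a',b,c)) (fun i _ => hq _) (Finset.mem_univ a)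
  have hle_C : ∀ a b c, q (a,b,c) ≤ qC c := fun a b c =>
    le_trans (hle_AC a b c) (Finset.single_le_sum (f := fun a' => qAC a' c)
      (fun i _ => hqAC_nonneg _ _) (Finset.mem_univ a))
  set S : Finset (α × β × γ) := Finset.univ.filter (fun t => 0 < q t) with hS
  have hmemS : ∀ t : α × β × γ, t ∈ S ↔ 0 < q t := by
    intro t; simp [hS]
  set r : α × β × γ → ℝ :=
    fun t => qAC t.1 t.2.2 * qBC t.2.1 t.2.2 / (q t * qC t.2.2) with hr
  have hrpos : ∀ t ∈ S, 0 < r t := by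
    intro t ht
    have hqt := (hmemS t).1 ht
    obtain ⟨a, b, c⟩ := t
    exact div_pos (mul_pos (lt_of_lt_of_le hqt (hle_AC a b c))
      (lt_of_lt_of_le hqt (hle_BC a b c)))
      (mul_pos hqt (lt_of_lt_of_le hqt (hle_C a b c)))
  have hsumS : ∑ t ∈ S, q t = 1 := by
    rw [← h1]
    apply Finset.sum_subset (Finset.filter_subset _ _)
    intro t _ ht
    have : ¬ 0 < q t := by simpa [hmemS] using ht
    linarith [hq t]
  -- Jensen
  have jensen := (strictConcaveOn_log_Ioi.concaveOn).le_map_sum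
    (fun t (_ : t ∈ S) => hq t) hsumS (fun t ht => Set.mem_Ioi.2 (hrpos t ht))
  simp only [smul_eq_mul] at jensen
  -- bound the argument of the log
  have hqr : ∀ t ∈ S, q t * r t = qAC t.1 t.2.2 * qBC t.2.1 t.2.2 / qC t.2.2 := by
    intro t ht
    have hqt := (hmemS t).1 ht
    have hCt : 0 < qC t.2.2 := by
      obtain ⟨a, b, c⟩ := t
      exact lt_of_lt_of_le hqt (hle_C a b c)
    rw [hr]
    field_simp
  have hbound : ∑ t ∈ S, q t * r t ≤ 1 := by
    rw [Finset.sum_congr rfl hqr]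
    have step1 : ∑ t ∈ S, qAC t.1 t.2.2 * qBC t.2.1 t.2.2 / qC t.2.2
        ≤ ∑ t : α × β × γ, qAC t.1 t.2.2 * qBC t.2.1 t.2.2 / qC t.2.2 := by
      apply Finset.sum_le_sum_of_subset_of_nonneg (Finset.subset_univ S)
      intro t _ _
      exact div_nonneg (mul_nonneg (hqAC_nonneg _ _) (hqBC_nonneg _ _)) (hqC_nonneg _)
    have step2 : ∑ t : α × β × γ, qAC t.1 t.2.2 * qBC t.2.1 t.2.2 / qC t.2.2 ≤ 1 := by
      have expand : ∑ t : α × β × γ, qAC t.1 t.2.2 * qBC t.2.1 t.2.2 / qC t.2.2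
          = ∑ c, ∑ a, ∑ b, qAC a c * qBC b c / qC c := by
        rw [Fintype.sum_prod_type]
        rw [show (∑ a, ∑ x : β × γ, qAC a x.2 * qBC x.1 x.2 / qC x.2)
            = ∑ a, ∑ b, ∑ c, qAC a c * qBC b c / qC c from
          Finset.sum_congr rfl fun a _ => Fintype.sum_prod_type _]
        exact sum3_comm _
      rw [expand]
      have perc : ∀ c, ∑ a, ∑ b, qAC a c * qBC b c / qC c ≤ qC c := by
        intro c
        by_cases hc : qC c = 0
        · have hACz : ∀ a, qAC a c = 0 := by
            intro a
            have h1' : qAC a c ≤ qC c := Finset.single_le_sum (f := fun a' => qAC a' c)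
              (fun i _ => hqAC_nonneg _ _) (Finset.mem_univ a)
            have := hqAC_nonneg a c
            linarith [hc ▸ h1']
          simp [hACz, hc]
        · have : ∑ a, ∑ b, qAC a c * qBC b c / qC c
              = (∑ a, qAC a c) * (∑ b, qBC b c) / qC c := by
            rw [Finset.sum_mul_sum]
            rw [Finset.sum_div]
            apply Finset.sum_congr rfl
            intro a _
            rw [Finset.sum_div]
          rw [this]
          have hA : (∑ a, qAC a c) = qC c := rfl
          have hB : (∑ b, qBC b c) = qC c := by
            rw [hqBC, hqC]
            exact Finset.sum_comm
          rw [hA, hB, mul_div_assoc, div_self hc, mul_one]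
      calc ∑ c, ∑ a, ∑ b, qAC a c * qBC b c / qC c ≤ ∑ c, qC c :=
            Finset.sum_le_sum fun c _ => perc c
        _ = 1 := by
            rw [← h1, Fintype.sum_prod_type]
            rw [show (∑ a, ∑ x : β × γ, q (a, x)) = ∑ a, ∑ b, ∑ c, q (a,b,c) from
              Finset.sum_congr rfl fun a _ => Fintype.sum_prod_type _]
            exact (sum3_comm _).symm
    linarith
  have hlog0 : Real.log (∑ t ∈ S, q t * r t) ≤ 0 :=
    Real.log_nonpos (Finset.sum_nonneg fun t ht => mul_nonneg (hq t) (le_of_lt (hrpos t ht)))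
      hbound
  have hmain : ∑ t ∈ S, q t * Real.log (r t) ≤ 0 := le_trans jensen hlog0
  -- convert the goal
  have eq_q : ent q = ∑ t : α × β × γ, -(q t * Real.log (q t)) := rfl
  have eq_C : ent qC = ∑ t : α × β × γ, -(q t * Real.log (qC t.2.2)) := by
    rw [ent]
    rw [show (∑ t : α × β × γ, -(q t * Real.log (qC t.2.2)))
        = ∑ a, ∑ b, ∑ c, -(q (a,b,c) * Real.log (qC c)) from by
      rw [Fintype.sum_prod_type]
      exact Finset.sum_congr rfl fun a _ => Fintype.sum_prod_type _]
    rw [sum3_comm]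
    refine Finset.sum_congr rfl fun c _ => ?_
    simp only [hqC]
    exact (negmul_sum2 (fun a b => q (a,b,c)) (Real.log (∑ a, ∑ b, q (a,b,c))))
  have eq_AC : ent (fun ac : α × γ => ∑ b, q (ac.1, b, ac.2))
      = ∑ t : α × β × γ, -(q t * Real.log (qAC t.1 t.2.2)) := by
    rw [ent]
    rw [show (∑ t : α × β × γ, -(q t * Real.log (qAC t.1 t.2.2)))
        = ∑ a, ∑ b, ∑ c, -(q (a,b,c) * Real.log (qAC a c)) from by
      rw [Fintype.sum_prod_type]
      exact Finset.sum_congr rfl fun a _ => Fintype.sum_prod_type _]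
    rw [Fintype.sum_prod_type]
    apply Finset.sum_congr rfl
    intro a _
    rw [show (∑ b, ∑ c, -(q (a,b,c) * Real.log (qAC a c)))
        = ∑ c, ∑ b, -(q (a,b,c) * Real.log (qAC a c)) from Finset.sum_comm]
    refine Finset.sum_congr rfl fun c _ => ?_
    simp only [hqAC]
    exact (negmul_sum1 (fun b => q (a,b,c)) (Real.log (∑ b, q (a,b,c))))
  have eq_BC : ent (fun bc : β × γ => ∑ a, q (a, bc.1, bc.2))
      = ∑ t : α × β × γ, -(q t * Real.log (qBC t.2.1 t.2.2)) := by
    rw [ent]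
    rw [show (∑ t : α × β × γ, -(q t * Real.log (qBC t.2.1 t.2.2)))
        = ∑ a, ∑ b, ∑ c, -(q (a,b,c) * Real.log (qBC b c)) from by
      rw [Fintype.sum_prod_type]
      exact Finset.sum_congr rfl fun a _ => Fintype.sum_prod_type _]
    rw [Fintype.sum_prod_type]
    rw [show (∑ a, ∑ b, ∑ c, -(q (a,b,c) * Real.log (qBC b c)))
        = ∑ b, ∑ c, ∑ a, -(q (a,b,c) * Real.log (qBC b c)) from by
      rw [show (∑ a, ∑ b, ∑ c, -(q (a,b,c) * Real.log (qBC b c)))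
          = ∑ b, ∑ a, ∑ c, -(q (a,b,c) * Real.log (qBC b c)) from Finset.sum_comm]
      exact Finset.sum_congr rfl fun b _ => Finset.sum_comm]
    refine Finset.sum_congr rfl fun b _ => Finset.sum_congr rfl fun c _ => ?_
    simp only [hqBC]
    exact (negmul_sum1 (fun a => q (a,b,c)) (Real.log (∑ a, q (a,b,c))))
  have keyF : ∑ t : α × β × γ,
      (-(q t * Real.log (qAC t.1 t.2.2)) + -(q t * Real.log (qBC t.2.1 t.2.2))
        + (q t * Real.log (q t)) + (q t * Real.log (qC t.2.2)))
      = -∑ t ∈ S, q t * Real.log (r t) := by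
    have vanish : ∀ t ∈ Finset.univ, t ∉ S →
        (-(q t * Real.log (qAC t.1 t.2.2)) + -(q t * Real.log (qBC t.2.1 t.2.2))
          + (q t * Real.log (q t)) + (q t * Real.log (qC t.2.2))) = 0 := by
      intro t _ ht
      have hqt0 : q t = 0 := by
        have : ¬ 0 < q t := by simpa [hmemS] using ht
        linarith [hq t]
      simp [hqt0]
    have onS : ∀ t ∈ S,
        (-(q t * Real.log (qAC t.1 t.2.2)) + -(q t * Real.log (qBC t.2.1 t.2.2))
          + (q t * Real.log (q t)) + (q t * Real.log (qC t.2.2)))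
        = -(q t * Real.log (r t)) := by
      intro t ht
      have hqt := (hmemS t).1 ht
      have hACt : 0 < qAC t.1 t.2.2 := by
        obtain ⟨a, b, c⟩ := t; exact lt_of_lt_of_le hqt (hle_AC a b c)
      have hBCt : 0 < qBC t.2.1 t.2.2 := by
        obtain ⟨a, b, c⟩ := t; exact lt_of_lt_of_le hqt (hle_BC a b c)
      have hCt : 0 < qC t.2.2 := by
        obtain ⟨a, b, c⟩ := t; exact lt_of_lt_of_le hqt (hle_C a b c)
      have hlr : Real.log (r t)
          = Real.log (qAC t.1 t.2.2) + Real.log (qBC t.2.1 t.2.2)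
            - (Real.log (q t) + Real.log (qC t.2.2)) := by
        rw [hr]
        rw [Real.log_div (by positivity) (by positivity)]
        rw [Real.log_mul (ne_of_gt hACt) (ne_of_gt hBCt)]
        rw [Real.log_mul (ne_of_gt hqt) (ne_of_gt hCt)]
      rw [hlr]; ring
    calc ∑ t : α × β × γ,
        (-(q t * Real.log (qAC t.1 t.2.2)) + -(q t * Real.log (qBC t.2.1 t.2.2))
          + (q t * Real.log (q t)) + (q t * Real.log (qC t.2.2)))
        = ∑ t ∈ S,
          (-(q t * Real.log (qAC t.1 t.2.2)) + -(q t * Real.log (qBC t.2.1 t.2.2))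
            + (q t * Real.log (q t)) + (q t * Real.log (qC t.2.2))) :=
          (Finset.sum_subset (Finset.subset_univ S) vanish).symm
      _ = ∑ t ∈ S, -(q t * Real.log (r t)) := Finset.sum_congr rfl onS
      _ = -∑ t ∈ S, q t * Real.log (r t) := Finset.sum_neg_distrib _
  have hF : 0 ≤ ∑ t : α × β × γ,
      (-(q t * Real.log (qAC t.1 t.2.2)) + -(q t * Real.log (qBC t.2.1 t.2.2))
        + (q t * Real.log (q t)) + (q t * Real.log (qC t.2.2))) := by
    rw [keyF]; linarith [hmain]
  have split : ∑ t : α × β × γ,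
      (-(q t * Real.log (qAC t.1 t.2.2)) + -(q t * Real.log (qBC t.2.1 t.2.2))
        + (q t * Real.log (q t)) + (q t * Real.log (qC t.2.2)))
      = (∑ t : α × β × γ, -(q t * Real.log (qAC t.1 t.2.2)))
        + (∑ t : α × β × γ, -(q t * Real.log (qBC t.2.1 t.2.2)))
        + (∑ t : α × β × γ, q t * Real.log (q t))
        + (∑ t : α × β × γ, q t * Real.log (qC t.2.2)) := by
    simp [Finset.sum_add_distrib]
  have e1 : ∑ t : α × β × γ, q t * Real.log (q t)
      = -∑ t : α × β × γ, -(q t * Real.log (q t)) := by simp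
  have e2 : ∑ t : α × β × γ, q t * Real.log (qC t.2.2)
      = -∑ t : α × β × γ, -(q t * Real.log (qC t.2.2)) := by simp
  rw [eq_q, eq_C, eq_AC, eq_BC]
  linarith [hF, split, e1, e2]


end Core

namespace FinPMF

variable {Ω : Type*} [Fintype Ω] (μ : FinPMF Ω)

lemma prob_nonneg' {α : Type*} [DecidableEq α] (X : Ω → α) (x : α) : 0 ≤ μ.prob X x := by
  apply Finset.sum_nonneg
  intro ω _
  split
  · exact μ.nonneg ω
  · exact le_rfl

lemma sum_prob' {α : Type*} [Fintype α] [DecidableEq α] (X : Ω → α) :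
    ∑ x, μ.prob X x = 1 := by
  unfold prob
  rw [Finset.sum_comm]
  simpa using μ.sum_one

lemma H_eq_ent {α : Type*} [Fintype α] [DecidableEq α] (X : Ω → α) :
    μ.H X = ent (μ.prob X) := rfl

lemma prob_comp' {α β : Type*} [Fintype α] [DecidableEq α] [DecidableEq β]
    (X : Ω → α) (f : α → β) (y : β) :
    μ.prob (fun ω => f (X ω)) y = ∑ x, if f x = y then μ.prob X x else 0 := by
  unfold prob
  symm
  calc (∑ x : α, if f x = y then (∑ ω, if X ω = x then μ.p ω else 0) else 0)
      = ∑ x : α, ∑ ω, (if X ω = x then (if f x = y then μ.p ω else 0) else 0) := by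
        apply Finset.sum_congr rfl; intro x _
        split_ifs with h
        · apply Finset.sum_congr rfl; intro ω _; split_ifs <;> simp_all
        · symm; apply Finset.sum_eq_zero; intro ω _; split_ifs <;> simp_all
    _ = ∑ ω, ∑ x : α, (if X ω = x then (if f x = y then μ.p ω else 0) else 0) :=
        Finset.sum_comm
    _ = ∑ ω, (if f (X ω) = y then μ.p ω else 0) := by
        apply Finset.sum_congr rfl; intro ω _
        simp [Finset.sum_ite_eq]

lemma H_comp_inj {α β : Type*} [Fintype α] [DecidableEq α] [Fintype β] [DecidableEq β]
    (X : Ω → α) (f : α → β) (hf : Function.Injective f) :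
    μ.H (fun ω => f (X ω)) = μ.H X := by
  have h1 : ∀ x : α, μ.prob (fun ω => f (X ω)) (f x) = μ.prob X x := by
    intro x
    rw [prob_comp']
    rw [Finset.sum_eq_single x]
    · simp
    · intro x' _ hx'
      have : f x' ≠ f x := fun h => hx' (hf h)
      simp [this]
    · simp
  have h0 : ∀ y ∉ Finset.univ.image f, μ.prob (fun ω => f (X ω)) y = 0 := by
    intro y hy
    rw [prob_comp']
    apply Finset.sum_eq_zero
    intro x _
    have : f x ≠ y := fun h => hy (Finset.mem_image.2 ⟨x, Finset.mem_univ x, h⟩)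
    simp [this]
  unfold H
  rw [← Finset.sum_subset (Finset.subset_univ (Finset.univ.image f))]
  · rw [Finset.sum_image (fun x _ x' _ h => hf h)]
    apply Finset.sum_congr rfl
    intro x _
    rw [h1]
  · intro y _ hy
    rw [h0 y hy]
    simp


section Bridge

variable {α β γ : Type*} [Fintype α] [DecidableEq α] [Fintype β] [DecidableEq β]
  [Fintype γ] [DecidableEq γ] (A : Ω → α) (B : Ω → β) (C : Ω → γ)

theorem H_markov (h : μ.CondIndep A B C) :
    μ.H (fun ω => (A ω, B ω, C ω)) + μ.H B
      = μ.H (fun ω => (A ω, B ω)) + μ.H (fun ω => (B ω, C ω)) := by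
  set q : α × β × γ → ℝ := μ.prob (fun ω => (A ω, B ω, C ω)) with hqdef
  have hnn : ∀ t, 0 ≤ q t := fun t => μ.prob_nonneg' _ t
  have hm : ∀ a b c, q (a,b,c) * (∑ a', ∑ c', q (a',b,c')) =
      (∑ c', q (a,b,c')) * (∑ a', q (a',b,c)) := by
    intro a b c
    have h0 := h a b c
    rw [marg_B μ A B C b, marg_AB μ A B C a b, marg_BC μ A B C b c] at h0
    exact h0
  have eB : (fun b => ∑ a, ∑ c, q (a,b,c)) = μ.prob B := by
    funext b; exact (marg_B μ A B C b).symm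
  have eAB : (fun ab : α × β => ∑ c, q (ab.1, ab.2, c)) = μ.prob (fun ω => (A ω, B ω)) := by
    funext ab; obtain ⟨a, b⟩ := ab; exact (marg_AB μ A B C a b).symm
  have eBC : (fun bc : β × γ => ∑ a, q (a, bc.1, bc.2)) = μ.prob (fun ω => (B ω, C ω)) := by
    funext bc; obtain ⟨b, c⟩ := bc; exact (marg_BC μ A B C b c).symm
  have main := ent_markov q hnn hm
  rw [eB, eAB, eBC] at main
  simpa only [H_eq_ent] using main

theorem H_submod :
    μ.H (fun ω => (A ω, B ω, C ω)) + μ.H C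
      ≤ μ.H (fun ω => (A ω, C ω)) + μ.H (fun ω => (B ω, C ω)) := by
  set q : α × β × γ → ℝ := μ.prob (fun ω => (A ω, B ω, C ω)) with hqdef
  have hnn : ∀ t, 0 ≤ q t := fun t => μ.prob_nonneg' _ t
  have hsum : ∑ t, q t = 1 := μ.sum_prob' _
  have eC : (fun c => ∑ a, ∑ b, q (a,b,c)) = μ.prob C := by
    funext c; exact (marg_C μ A B C c).symm
  have eAC : (fun ac : α × γ => ∑ b, q (ac.1, b, ac.2)) = μ.prob (fun ω => (A ω, C ω)) := by
    funext ac; obtain ⟨a, c⟩ := ac; exact (marg_AC μ A B C a c).symm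
  have eBC : (fun bc : β × γ => ∑ a, q (a, bc.1, bc.2)) = μ.prob (fun ω => (B ω, C ω)) := by
    funext bc; obtain ⟨b, c⟩ := bc; exact (marg_BC μ A B C b c).symm
  have main := ent_submod q hnn hsum
  rw [eC, eAC, eBC] at main
  simpa only [H_eq_ent] using main

end Bridge

end FinPMF


/-- For the Markov chain `V − (Y1,S1) − (Y2,S2)`,
`[H(V|Y2,S2) − H(V|Y1,S1)]⁺ + H(Y1|Y2,S2,V) = H(Y1,S1|Y2,S2) − H(S1|Y1,Y2,S2,V)`. -/
theorem stmt_0 {Ω 𝒱 𝒴₁ 𝒮₁ 𝒴₂ 𝒮₂ : Type*} [Fintype Ω]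
    [Fintype 𝒱] [DecidableEq 𝒱] [Fintype 𝒴₁] [DecidableEq 𝒴₁]
    [Fintype 𝒮₁] [DecidableEq 𝒮₁] [Fintype 𝒴₂] [DecidableEq 𝒴₂]
    [Fintype 𝒮₂] [DecidableEq 𝒮₂]
    (μ : FinPMF Ω) (V : Ω → 𝒱) (Y1 : Ω → 𝒴₁) (S1 : Ω → 𝒮₁) (Y2 : Ω → 𝒴₂) (S2 : Ω → 𝒮₂)
    (hMarkov : μ.CondIndep V (fun ω => (Y1 ω, S1 ω)) (fun ω => (Y2 ω, S2 ω))) :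
    max (μ.condH V (fun ω => (Y2 ω, S2 ω)) - μ.condH V (fun ω => (Y1 ω, S1 ω))) 0
        + μ.condH Y1 (fun ω => (Y2 ω, S2 ω, V ω))
      = μ.condH (fun ω => (Y1 ω, S1 ω)) (fun ω => (Y2 ω, S2 ω))
        - μ.condH S1 (fun ω => (Y1 ω, Y2 ω, S2 ω, V ω)) := by
  classical
  have hM : μ.H (fun ω => (V ω, (Y1 ω, S1 ω), (Y2 ω, S2 ω)))
        + μ.H (fun ω => (Y1 ω, S1 ω))
      = μ.H (fun ω => (V ω, (Y1 ω, S1 ω)))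
        + μ.H (fun ω => ((Y1 ω, S1 ω), (Y2 ω, S2 ω))) :=
    μ.H_markov V (fun ω => (Y1 ω, S1 ω)) (fun ω => (Y2 ω, S2 ω)) hMarkov
  have hS : μ.H (fun ω => (V ω, (Y1 ω, S1 ω), (Y2 ω, S2 ω)))
        + μ.H (fun ω => (Y2 ω, S2 ω))
      ≤ μ.H (fun ω => (V ω, (Y2 ω, S2 ω)))
        + μ.H (fun ω => ((Y1 ω, S1 ω), (Y2 ω, S2 ω))) :=
    μ.H_submod V (fun ω => (Y1 ω, S1 ω)) (fun ω => (Y2 ω, S2 ω))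
  have hf1 : Function.Injective
      (fun t : 𝒱 × 𝒴₂ × 𝒮₂ => (t.2.1, t.2.2, t.1)) := by
    intro a b h
    simp only [Prod.ext_iff] at h ⊢
    tauto
  have R1 : μ.H (fun ω => (Y2 ω, S2 ω, V ω)) = μ.H (fun ω => (V ω, Y2 ω, S2 ω)) :=
    μ.H_comp_inj (fun ω => (V ω, Y2 ω, S2 ω)) (fun t => (t.2.1, t.2.2, t.1)) hf1
  have hf2 : Function.Injective
      (fun t : 𝒱 × (𝒴₁ × 𝒮₁) × (𝒴₂ × 𝒮₂) =>
        (t.2.1.2, t.2.1.1, t.2.2.1, t.2.2.2, t.1)) := by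
    intro a b h
    simp only [Prod.ext_iff] at h ⊢
    tauto
  have R2 : μ.H (fun ω => (S1 ω, (Y1 ω, Y2 ω, S2 ω, V ω)))
      = μ.H (fun ω => (V ω, (Y1 ω, S1 ω), (Y2 ω, S2 ω))) :=
    μ.H_comp_inj (fun ω => (V ω, (Y1 ω, S1 ω), (Y2 ω, S2 ω)))
      (fun t => (t.2.1.2, t.2.1.1, t.2.2.1, t.2.2.2, t.1)) hf2
  simp only [FinPMF.condH]
  rw [max_eq_left (by linarith)]
  linarith
end

section
/- Let X, M, Y, K be random variables on a common probability space with values in finite sets. If M is independent of X, and X is conditionally independent of the pair (Y, M) given K (i.e., the Markov chain X − K − (Y, M) holds), then I(X, M; Y) ≤ I(M; Y) + I(X; K). (This is the key dependence-breaking step, steps (c)–(d) of the block-Markov secrecy analysis in the proof of Theorem 1, where X represents past messages and eavesdropper observations, M the current secure message, Y the current eavesdropper observation, and K the secret key of the previous block.) -/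
open scoped BigOperators Classical

set_option linter.unusedSectionVars false

namespace StmtAux

open FinPMF

variable {Ω α β γ : Type*} [Fintype Ω] (μ : FinPMF Ω)
variable [Fintype α] [DecidableEq α] [Fintype β] [DecidableEq β] [Fintype γ] [DecidableEq γ]

lemma prob_nonneg (X : Ω → α) (x : α) : 0 ≤ μ.prob X x :=
  Finset.sum_nonneg fun ω _ => by split_ifs; exacts [μ.nonneg ω, le_refl 0]

lemma sum_prob (X : Ω → α) : ∑ x, μ.prob X x = 1 := by
  simp only [FinPMF.prob]
  rw [Finset.sum_comm]
  simp [μ.sum_one]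

lemma prob_mono {δ : Type*} [DecidableEq δ] (X : Ω → α) (Y : Ω → δ) (x : α) (y : δ)
    (h : ∀ ω, X ω = x → Y ω = y) : μ.prob X x ≤ μ.prob Y y := by
  refine Finset.sum_le_sum fun ω _ => ?_
  by_cases hx : X ω = x
  · rw [if_pos hx, if_pos (h ω hx)]
  · rw [if_neg hx]; split_ifs; exacts [μ.nonneg ω, le_refl 0]

lemma prob_comp {δ : Type*} [DecidableEq δ] (Z : Ω → α) (f : α → δ)
    (hf : Function.Injective f) (a : α) :
    μ.prob (fun ω => f (Z ω)) (f a) = μ.prob Z a :=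
  Finset.sum_congr rfl fun ω _ => by simp [hf.eq_iff]

lemma H_comp {δ : Type*} [Fintype δ] [DecidableEq δ] (Z : Ω → α) (f : α → δ)
    (hf : Function.Injective f) :
    μ.H (fun ω => f (Z ω)) = μ.H Z := by
  simp only [FinPMF.H]
  have key : ∀ b ∈ Finset.univ, b ∉ Finset.image f Finset.univ →
      -(μ.prob (fun ω => f (Z ω)) b * Real.log (μ.prob (fun ω => f (Z ω)) b)) = 0 := by
    intro b _ hb
    have hzero : μ.prob (fun ω => f (Z ω)) b = 0 := by
      refine Finset.sum_eq_zero fun ω _ => ?_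
      have : f (Z ω) ≠ b := fun h => hb (by simp [← h])
      simp [this]
    simp [hzero]
  calc ∑ b : δ, -(μ.prob (fun ω => f (Z ω)) b * Real.log (μ.prob (fun ω => f (Z ω)) b))
      = ∑ b ∈ Finset.image f Finset.univ,
          -(μ.prob (fun ω => f (Z ω)) b * Real.log (μ.prob (fun ω => f (Z ω)) b)) :=
        (Finset.sum_subset (Finset.subset_univ _) key).symm
    _ = ∑ a : α, -(μ.prob (fun ω => f (Z ω)) (f a) * Real.log (μ.prob (fun ω => f (Z ω)) (f a))) :=
        Finset.sum_image (fun x _ y _ h => hf h)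
    _ = ∑ a : α, -(μ.prob Z a * Real.log (μ.prob Z a)) := by
        refine Finset.sum_congr rfl fun a _ => ?_
        rw [prob_comp μ Z f hf a]

lemma marg_fst (A : Ω → α) (B : Ω → β) (b : β) :
    ∑ a, μ.prob (fun ω => (A ω, B ω)) (a, b) = μ.prob B b := by
  simp only [FinPMF.prob]
  rw [Finset.sum_comm]
  refine Finset.sum_congr rfl fun ω _ => ?_
  by_cases h2 : B ω = b <;> simp [Prod.ext_iff, h2]

lemma marg_snd (A : Ω → α) (B : Ω → β) (a : α) :
    ∑ b, μ.prob (fun ω => (A ω, B ω)) (a, b) = μ.prob A a := by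
  simp only [FinPMF.prob]
  rw [Finset.sum_comm]
  refine Finset.sum_congr rfl fun ω _ => ?_
  by_cases h1 : A ω = a <;> simp [Prod.ext_iff, h1]

lemma marg3_a (A : Ω → α) (B : Ω → β) (C : Ω → γ) (b : β) (c : γ) :
    ∑ a, μ.prob (fun ω => (A ω, B ω, C ω)) (a, b, c) = μ.prob (fun ω => (B ω, C ω)) (b, c) := by
  simp only [FinPMF.prob]
  rw [Finset.sum_comm]
  refine Finset.sum_congr rfl fun ω _ => ?_
  by_cases h1 : B ω = b <;> by_cases h2 : C ω = c <;> simp [Prod.ext_iff, h1, h2]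

lemma marg3_b (A : Ω → α) (B : Ω → β) (C : Ω → γ) (a : α) (c : γ) :
    ∑ b, μ.prob (fun ω => (A ω, B ω, C ω)) (a, b, c) = μ.prob (fun ω => (A ω, C ω)) (a, c) := by
  simp only [FinPMF.prob]
  rw [Finset.sum_comm]
  refine Finset.sum_congr rfl fun ω _ => ?_
  by_cases h1 : A ω = a <;> by_cases h2 : C ω = c <;> simp [Prod.ext_iff, h1, h2]

lemma marg3_c (A : Ω → α) (B : Ω → β) (C : Ω → γ) (a : α) (b : β) :
    ∑ c, μ.prob (fun ω => (A ω, B ω, C ω)) (a, b, c) = μ.prob (fun ω => (A ω, B ω)) (a, b) := by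
  simp only [FinPMF.prob]
  rw [Finset.sum_comm]
  refine Finset.sum_congr rfl fun ω _ => ?_
  by_cases h1 : A ω = a <;> by_cases h2 : B ω = b <;> simp [Prod.ext_iff, h1, h2]

end StmtAux
namespace StmtAux

variable {Ω α β γ : Type*} [Fintype Ω] (μ : FinPMF Ω)
variable [Fintype α] [DecidableEq α] [Fintype β] [DecidableEq β] [Fintype γ] [DecidableEq γ]

open FinPMF

lemma indep_H (M : Ω → α) (X : Ω → β) (h : μ.Indep M X) :
    μ.H (fun ω => (M ω, X ω)) = μ.H M + μ.H X := by
  simp only [FinPMF.H, Fintype.sum_prod_type]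
  have key : ∀ m x, -(μ.prob (fun ω => (M ω, X ω)) (m, x) *
      Real.log (μ.prob (fun ω => (M ω, X ω)) (m, x))) =
      μ.prob X x * -(μ.prob M m * Real.log (μ.prob M m)) +
      μ.prob M m * -(μ.prob X x * Real.log (μ.prob X x)) := by
    intro m x
    rw [h m x]
    by_cases hp : μ.prob M m = 0
    · simp [hp]
    by_cases hq : μ.prob X x = 0
    · simp [hq]
    rw [Real.log_mul hp hq]; ring
  calc ∑ m, ∑ x, -(μ.prob (fun ω => (M ω, X ω)) (m, x) *
        Real.log (μ.prob (fun ω => (M ω, X ω)) (m, x)))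
      = ∑ m, ∑ x, (μ.prob X x * -(μ.prob M m * Real.log (μ.prob M m)) +
          μ.prob M m * -(μ.prob X x * Real.log (μ.prob X x))) := by
        exact Finset.sum_congr rfl fun m _ => Finset.sum_congr rfl fun x _ => key m x
    _ = ∑ m, ((∑ x, μ.prob X x) * -(μ.prob M m * Real.log (μ.prob M m)) +
          μ.prob M m * ∑ x, -(μ.prob X x * Real.log (μ.prob X x))) := by
        refine Finset.sum_congr rfl fun m _ => ?_
        rw [Finset.sum_add_distrib, ← Finset.sum_mul, ← Finset.mul_sum]
    _ = μ.H M + μ.H X := by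
        rw [sum_prob]
        simp only [one_mul, FinPMF.H]
        rw [Finset.sum_add_distrib, ← Finset.sum_mul]
        rw [sum_prob]
        ring

end StmtAux


namespace StmtAux

variable {Ω α β γ : Type*} [Fintype Ω] (μ : FinPMF Ω)
variable [Fintype α] [DecidableEq α] [Fintype β] [DecidableEq β] [Fintype γ] [DecidableEq γ]

open FinPMF

lemma H3_expand (A : Ω → α) (B : Ω → β) (C : Ω → γ) :
    μ.H (fun ω => (A ω, B ω, C ω)) = ∑ a, ∑ b, ∑ c,
      -(μ.prob (fun ω => (A ω, B ω, C ω)) (a, b, c) *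
        Real.log (μ.prob (fun ω => (A ω, B ω, C ω)) (a, b, c))) := by
  simp only [FinPMF.H, Fintype.sum_prod_type]

lemma HAB_expand (A : Ω → α) (B : Ω → β) (C : Ω → γ) :
    μ.H (fun ω => (A ω, B ω)) = ∑ a, ∑ b, ∑ c,
      -(μ.prob (fun ω => (A ω, B ω, C ω)) (a, b, c) *
        Real.log (μ.prob (fun ω => (A ω, B ω)) (a, b))) := by
  simp only [FinPMF.H, Fintype.sum_prod_type]
  refine Finset.sum_congr rfl fun a _ => Finset.sum_congr rfl fun b _ => ?_
  rw [← marg3_c μ A B C a b, Finset.sum_mul, ← Finset.sum_neg_distrib]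

lemma HBC_expand (A : Ω → α) (B : Ω → β) (C : Ω → γ) :
    μ.H (fun ω => (B ω, C ω)) = ∑ a, ∑ b, ∑ c,
      -(μ.prob (fun ω => (A ω, B ω, C ω)) (a, b, c) *
        Real.log (μ.prob (fun ω => (B ω, C ω)) (b, c))) := by
  rw [Finset.sum_comm]
  simp only [FinPMF.H, Fintype.sum_prod_type]
  refine Finset.sum_congr rfl fun b _ => ?_
  rw [Finset.sum_comm]
  refine Finset.sum_congr rfl fun c _ => ?_
  rw [← marg3_a μ A B C b c, Finset.sum_mul, ← Finset.sum_neg_distrib]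

lemma HAC_expand (A : Ω → α) (B : Ω → β) (C : Ω → γ) :
    μ.H (fun ω => (A ω, C ω)) = ∑ a, ∑ b, ∑ c,
      -(μ.prob (fun ω => (A ω, B ω, C ω)) (a, b, c) *
        Real.log (μ.prob (fun ω => (A ω, C ω)) (a, c))) := by
  simp only [FinPMF.H, Fintype.sum_prod_type]
  refine Finset.sum_congr rfl fun a _ => ?_
  rw [Finset.sum_comm]
  refine Finset.sum_congr rfl fun c _ => ?_
  rw [← marg3_b μ A B C a c, Finset.sum_mul, ← Finset.sum_neg_distrib]

lemma HB_expand (A : Ω → α) (B : Ω → β) (C : Ω → γ) :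
    μ.H B = ∑ a, ∑ b, ∑ c,
      -(μ.prob (fun ω => (A ω, B ω, C ω)) (a, b, c) * Real.log (μ.prob B b)) := by
  rw [Finset.sum_comm]
  simp only [FinPMF.H]
  refine Finset.sum_congr rfl fun b _ => ?_
  have hb : μ.prob B b = ∑ a, ∑ c, μ.prob (fun ω => (A ω, B ω, C ω)) (a, b, c) := by
    rw [← marg_fst μ A B b]
    exact Finset.sum_congr rfl fun a _ => (marg3_c μ A B C a b).symm
  calc -(μ.prob B b * Real.log (μ.prob B b))
      = ∑ a, ∑ c, -(μ.prob (fun ω => (A ω, B ω, C ω)) (a, b, c) * Real.log (μ.prob B b)) := by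
        rw [show (∑ a, ∑ c, -(μ.prob (fun ω => (A ω, B ω, C ω)) (a, b, c) * Real.log (μ.prob B b)))
            = -((∑ a, ∑ c, μ.prob (fun ω => (A ω, B ω, C ω)) (a, b, c)) * Real.log (μ.prob B b)) by
          rw [Finset.sum_mul, ← Finset.sum_neg_distrib]
          refine Finset.sum_congr rfl fun a _ => ?_
          rw [Finset.sum_mul, ← Finset.sum_neg_distrib]]
        rw [← hb]
    _ = _ := rfl

lemma HC_expand (A : Ω → α) (B : Ω → β) (C : Ω → γ) :
    μ.H C = ∑ a, ∑ b, ∑ c,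
      -(μ.prob (fun ω => (A ω, B ω, C ω)) (a, b, c) * Real.log (μ.prob C c)) := by
  rw [Finset.sum_comm]
  conv_lhs => skip
  have : ∀ b, ∑ a, ∑ c, -(μ.prob (fun ω => (A ω, B ω, C ω)) (a, b, c) * Real.log (μ.prob C c))
      = ∑ c, ∑ a, -(μ.prob (fun ω => (A ω, B ω, C ω)) (a, b, c) * Real.log (μ.prob C c)) :=
    fun b => Finset.sum_comm
  rw [Finset.sum_congr rfl fun b _ => this b, Finset.sum_comm]
  simp only [FinPMF.H]
  refine Finset.sum_congr rfl fun c _ => ?_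
  have hc : μ.prob C c = ∑ b, ∑ a, μ.prob (fun ω => (A ω, B ω, C ω)) (a, b, c) := by
    rw [← marg_fst μ B C c]
    exact Finset.sum_congr rfl fun b _ => (marg3_a μ A B C b c).symm
  rw [hc, Finset.sum_mul, ← Finset.sum_neg_distrib]
  refine Finset.sum_congr rfl fun b _ => ?_
  rw [Finset.sum_mul, ← Finset.sum_neg_distrib]

lemma condIndep_H (A : Ω → α) (B : Ω → β) (C : Ω → γ) (h : μ.CondIndep A B C) :
    μ.H (fun ω => (A ω, B ω, C ω)) =
      μ.H (fun ω => (A ω, B ω)) + μ.H (fun ω => (B ω, C ω)) - μ.H B := by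
  rw [H3_expand μ A B C, HAB_expand μ A B C, HBC_expand μ A B C, HB_expand μ A B C]
  simp only [← Finset.sum_add_distrib, ← Finset.sum_sub_distrib]
  refine Finset.sum_congr rfl fun a _ => Finset.sum_congr rfl fun b _ =>
    Finset.sum_congr rfl fun c _ => ?_
  set p3 := μ.prob (fun ω => (A ω, B ω, C ω)) (a, b, c) with hp3def
  by_cases h0 : p3 = 0
  · simp [h0]
  have hp3 : 0 < p3 := lt_of_le_of_ne (prob_nonneg μ _ _) (Ne.symm h0)
  have hBle : p3 ≤ μ.prob B b :=
    prob_mono μ _ B (a, b, c) b (fun ω hω => by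
      simpa using congrArg (fun t => t.2.1) hω)
  have hBpos : 0 < μ.prob B b := lt_of_lt_of_le hp3 hBle
  have hprod : μ.prob (fun ω => (A ω, B ω)) (a, b) * μ.prob (fun ω => (B ω, C ω)) (b, c)
      = p3 * μ.prob B b := (h a b c).symm
  have hABpos : μ.prob (fun ω => (A ω, B ω)) (a, b) ≠ 0 := by
    intro hz
    rw [hz, zero_mul] at hprod
    exact (mul_pos hp3 hBpos).ne' hprod.symm
  have hBCpos : μ.prob (fun ω => (B ω, C ω)) (b, c) ≠ 0 := by
    intro hz
    rw [hz, mul_zero] at hprod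
    exact (mul_pos hp3 hBpos).ne' hprod.symm
  have hlog : Real.log (μ.prob (fun ω => (A ω, B ω)) (a, b)) +
      Real.log (μ.prob (fun ω => (B ω, C ω)) (b, c)) =
      Real.log p3 + Real.log (μ.prob B b) := by
    rw [← Real.log_mul hABpos hBCpos, hprod, Real.log_mul h0 hBpos.ne']
  linear_combination (p3 : ℝ) * hlog

end StmtAux

namespace StmtAux

variable {Ω α β γ : Type*} [Fintype Ω] (μ : FinPMF Ω)
variable [Fintype α] [DecidableEq α] [Fintype β] [DecidableEq β] [Fintype γ] [DecidableEq γ]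

open FinPMF

lemma condMI (A : Ω → α) (B : Ω → β) (C : Ω → γ) :
    μ.H (fun ω => (A ω, B ω, C ω)) ≤
      μ.H (fun ω => (A ω, C ω)) + μ.H (fun ω => (B ω, C ω)) - μ.H C := by
  rw [H3_expand μ A B C, HAC_expand μ A B C, HBC_expand μ A B C, HC_expand μ A B C]
  set p3 : α → β → γ → ℝ := fun a b c => μ.prob (fun ω => (A ω, B ω, C ω)) (a, b, c) with hp3def
  set pAC : α → γ → ℝ := fun a c => μ.prob (fun ω => (A ω, C ω)) (a, c) with hACdef
  set pBC : β → γ → ℝ := fun b c => μ.prob (fun ω => (B ω, C ω)) (b, c) with hBCdef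
  set pC : γ → ℝ := fun c => μ.prob C c with hCdef
  set q : α → β → γ → ℝ := fun a b c => if pC c = 0 then 0 else pAC a c * pBC b c / pC c
    with hqdef
  have hp3nn : ∀ a b c, 0 ≤ p3 a b c := fun a b c => prob_nonneg μ _ _
  have hsum_p : ∑ a, ∑ b, ∑ c, p3 a b c = 1 := by
    have := sum_prob μ (fun ω => (A ω, B ω, C ω))
    simpa [Fintype.sum_prod_type, hp3def] using this
  have hsum_q : ∑ a, ∑ b, ∑ c, q a b c = 1 := by
    rw [Finset.sum_comm]
    rw [Finset.sum_congr rfl fun b (_ : b ∈ Finset.univ) =>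
      (Finset.sum_comm : ∑ a, ∑ c, q a b c = ∑ c, ∑ a, q a b c), Finset.sum_comm]
    have inner : ∀ c, ∑ b, ∑ a, q a b c = pC c := by
      intro c
      by_cases hc : pC c = 0
      · simp [hqdef, hc]
      have h1 : ∀ b, ∑ a, q a b c = pBC b c := by
        intro b
        simp only [hqdef, if_neg hc]
        simp only [mul_div_assoc]
        rw [← Finset.sum_mul]
        rw [show (∑ a, pAC a c) = pC c from marg_fst μ A C c]
        field_simp
      rw [Finset.sum_congr rfl fun b _ => h1 b]
      exact marg_fst μ B C c
    rw [Finset.sum_congr rfl fun c _ => inner c]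
    exact sum_prob μ C
  have key : ∀ a b c,
      p3 a b c - q a b c ≤
        (-(p3 a b c * Real.log (pAC a c)) + -(p3 a b c * Real.log (pBC b c)) -
          -(p3 a b c * Real.log (pC c))) - -(p3 a b c * Real.log (p3 a b c)) := by
    intro a b c
    have hq0 : 0 ≤ q a b c := by
      simp only [hqdef]
      split_ifs with hc
      · exact le_refl 0
      · exact div_nonneg (mul_nonneg (prob_nonneg μ _ _) (prob_nonneg μ _ _)) (prob_nonneg μ _ _)
    by_cases h0 : p3 a b c = 0
    · simp only [h0]
      simp
      linarith [hq0]
    have hp3 : 0 < p3 a b c := lt_of_le_of_ne (hp3nn a b c) (Ne.symm h0)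
    have hCle : p3 a b c ≤ pC c :=
      prob_mono μ _ C (a, b, c) c (fun ω hω => by
        simpa using congrArg (fun t => t.2.2) hω)
    have hACle : p3 a b c ≤ pAC a c :=
      prob_mono μ _ (fun ω => (A ω, C ω)) (a, b, c) (a, c) (fun ω hω => by
        simp only [Prod.ext_iff] at hω ⊢
        exact ⟨hω.1, hω.2.2⟩)
    have hBCle : p3 a b c ≤ pBC b c :=
      prob_mono μ _ (fun ω => (B ω, C ω)) (a, b, c) (b, c) (fun ω hω => by
        simp only [Prod.ext_iff] at hω ⊢
        exact ⟨hω.2.1, hω.2.2⟩)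
    have hCpos : 0 < pC c := lt_of_lt_of_le hp3 hCle
    have hACpos : 0 < pAC a c := lt_of_lt_of_le hp3 hACle
    have hBCpos : 0 < pBC b c := lt_of_lt_of_le hp3 hBCle
    have hqpos : 0 < q a b c := by
      simp only [hqdef, if_neg hCpos.ne']
      exact div_pos (mul_pos hACpos hBCpos) hCpos
    have hlogq : Real.log (q a b c) =
        Real.log (pAC a c) + Real.log (pBC b c) - Real.log (pC c) := by
      simp only [hqdef, if_neg hCpos.ne']
      rw [Real.log_div (mul_ne_zero hACpos.ne' hBCpos.ne') hCpos.ne',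
        Real.log_mul hACpos.ne' hBCpos.ne']
    have h2' : p3 a b c * (Real.log (q a b c) - Real.log (p3 a b c)) ≤ q a b c - p3 a b c := by
      have hlt := Real.log_le_sub_one_of_pos (div_pos hqpos hp3)
      rw [Real.log_div hqpos.ne' hp3.ne'] at hlt
      have := mul_le_mul_of_nonneg_left hlt hp3.le
      calc p3 a b c * (Real.log (q a b c) - Real.log (p3 a b c))
          ≤ p3 a b c * (q a b c / p3 a b c - 1) := this
        _ = q a b c - p3 a b c := by field_simp
    have e : (-(p3 a b c * Real.log (pAC a c)) + -(p3 a b c * Real.log (pBC b c)) -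
          -(p3 a b c * Real.log (pC c))) - -(p3 a b c * Real.log (p3 a b c))
        = p3 a b c * (Real.log (p3 a b c) - Real.log (q a b c)) := by
      rw [hlogq]; ring
    have e2 : p3 a b c * (Real.log (p3 a b c) - Real.log (q a b c))
        = -(p3 a b c * (Real.log (q a b c) - Real.log (p3 a b c))) := by ring
    linarith [h2', e, e2]
  have main : ∑ a, ∑ b, ∑ c, (p3 a b c - q a b c) ≤
      ∑ a, ∑ b, ∑ c,
        ((-(p3 a b c * Real.log (pAC a c)) + -(p3 a b c * Real.log (pBC b c)) -
          -(p3 a b c * Real.log (pC c))) - -(p3 a b c * Real.log (p3 a b c))) :=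
    Finset.sum_le_sum fun a _ => Finset.sum_le_sum fun b _ =>
      Finset.sum_le_sum fun c _ => key a b c
  have lhs0 : ∑ a, ∑ b, ∑ c, (p3 a b c - q a b c) = 0 := by
    simp only [Finset.sum_sub_distrib]
    rw [hsum_p, hsum_q]
    ring
  rw [lhs0] at main
  simp only [Finset.sum_sub_distrib, Finset.sum_add_distrib] at main
  linarith [main]

end StmtAux


set_option maxHeartbeats 1000000 in
open StmtAux in
/-- If `M` is independent of `X` and the Markov chain `X − K − (Y, M)` holds, then
`I(X, M; Y) ≤ I(M; Y) + I(X; K)`. -/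
theorem stmt_8 {Ω 𝒳 ℳ 𝒴 𝒦 : Type*} [Fintype Ω]
    [Fintype 𝒳] [DecidableEq 𝒳] [Fintype ℳ] [DecidableEq ℳ]
    [Fintype 𝒴] [DecidableEq 𝒴] [Fintype 𝒦] [DecidableEq 𝒦]
    (μ : FinPMF Ω) (X : Ω → 𝒳) (M : Ω → ℳ) (Y : Ω → 𝒴) (K : Ω → 𝒦)
    (hindep : μ.Indep M X)
    (hMarkov : μ.CondIndep X K (fun ω => (Y ω, M ω))) :
    μ.mutInfo (fun ω => (X ω, M ω)) Y ≤ μ.mutInfo M Y + μ.mutInfo X K := by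
  set W : Ω → 𝒴 × ℳ := fun ω => (Y ω, M ω) with hW
  -- h1 : H(X,M) = H X + H M
  have hswap1 : μ.H (fun ω => (X ω, M ω)) = μ.H (fun ω => (M ω, X ω)) :=
    H_comp μ (fun ω => (M ω, X ω)) (Prod.swap : ℳ × 𝒳 → 𝒳 × ℳ) Prod.swap_injective
  have h1 : μ.H (fun ω => (X ω, M ω)) = μ.H X + μ.H M := by
    rw [hswap1, indep_H μ M X hindep]; ring
  -- h2 : H((X,M),Y) = H(X,W)
  have h2 : μ.H (fun ω => ((X ω, M ω), Y ω)) = μ.H (fun ω => (X ω, W ω)) := by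
    have hf : Function.Injective (fun p : 𝒳 × (𝒴 × ℳ) => ((p.1, p.2.2), p.2.1)) := by
      intro p q h
      simp only [Prod.ext_iff] at h ⊢
      exact ⟨h.1.1, h.2, h.1.2⟩
    exact H_comp μ (fun ω => (X ω, W ω)) _ hf
  -- h3 : H(M,Y) = H W
  have h3 : μ.H (fun ω => (M ω, Y ω)) = μ.H W :=
    H_comp μ W (Prod.swap : 𝒴 × ℳ → ℳ × 𝒴) Prod.swap_injective
  -- h4 : Markov entropy identity
  have h4 : μ.H (fun ω => (X ω, K ω, W ω)) =
      μ.H (fun ω => (X ω, K ω)) + μ.H (fun ω => (K ω, W ω)) - μ.H K :=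
    condIndep_H μ X K W hMarkov
  -- h5 : submodularity
  have h5 : μ.H (fun ω => (X ω, K ω, W ω)) ≤
      μ.H (fun ω => (X ω, W ω)) + μ.H (fun ω => (K ω, W ω)) - μ.H W :=
    condMI μ X K W
  simp only [FinPMF.mutInfo]
  rw [h1, h2, h3]
  linarith [h4, h5]
end

section
/- In the binary ISAC setting with parameters p, q, λ, α ∈ (0,1), the conditional entropy of the legitimate output given its state and the eavesdropper's observations satisfies H(Y1 | S1, Y2, S2) = (1−α)(1−(λ∗p∗q)) · H_b( p(q∗λ) / (1−(λ∗p∗q)) ). -/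
open scoped BigOperators Classical

/-! ### Binary ISAC setting -/

/-- The binary convolution `a∗b = a(1−b) + (1−a)b`. -/
noncomputable def star (a b : ℝ) : ℝ := a * (1 - b) + (1 - a) * b

/-- The binary entropy function `H_b(x) = −x log x − (1−x) log (1−x)` (natural logarithm). -/
noncomputable def binEnt (x : ℝ) : ℝ := -(x * Real.log x) - (1 - x) * Real.log (1 - x)

/-- The input/action pmf `P_XA`: `P_XA(0,0) = (1−p)(1−q)`, `P_XA(1,0) = pq`,
`P_XA(0,1) = (1−p)q`, `P_XA(1,1) = p(1−q)`. -/
def PXA (p q : ℝ) : Bool → Bool → ℝ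
  | false, false => (1 - p) * (1 - q)
  | true, false => p * q
  | false, true => (1 - p) * q
  | true, true => p * (1 - q)

/-- The conditional state pmf `P_{S1 S2 | A}(s1, s2 | a)` with parameters `λ` and `α`. -/
def PS (l α : ℝ) : Bool → Bool → Bool → ℝ
  | false, false, false => l
  | false, true, false => (1 - l) * (1 - α)
  | false, false, true => 0
  | false, true, true => (1 - l) * α
  | true, false, false => 1 - l
  | true, true, false => l * (1 - α)
  | true, false, true => 0
  | true, true, true => l * α

/-- Sample space of the binary ISAC setting: `ω = (x, a, s1, s2)`. -/
abbrev Ω4 : Type := Bool × Bool × Bool × Bool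

/-- The channel input `X`. -/
def Xrv (ω : Ω4) : Bool := ω.1
/-- The action `A`. -/
def Arv (ω : Ω4) : Bool := ω.2.1
/-- The legitimate receiver's state `S1`. -/
def S1rv (ω : Ω4) : Bool := ω.2.2.1
/-- The eavesdropper's state `S2`. -/
def S2rv (ω : Ω4) : Bool := ω.2.2.2
/-- The legitimate receiver's channel output `Y1 = S1 · X`. -/
def Y1rv (ω : Ω4) : Bool := S1rv ω && Xrv ω
/-- The eavesdropper's channel output `Y2 = S2 · X`. -/
def Y2rv (ω : Ω4) : Bool := S2rv ω && Xrv ω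

/-- The joint pmf of the binary ISAC setting:
`P(x, a, s1, s2) = P_XA(x, a) · P_{S1 S2 | A}(s1, s2 | a)`. -/
def IsBinISAC (p q l α : ℝ) (μ : FinPMF Ω4) : Prop :=
  ∀ x a s1 s2, μ.p (x, a, s1, s2) = PXA p q x a * PS l α a s1 s2

/-- In the binary ISAC setting,
`H(Y1 | S1, Y2, S2) = (1−α)(1−(λ∗p∗q)) · H_b(p(q∗λ) / (1−(λ∗p∗q)))`. -/
theorem stmt_12 (p q l α : ℝ) (hp : p ∈ Set.Ioo (0 : ℝ) 1) (hq : q ∈ Set.Ioo (0 : ℝ) 1)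
    (hl : l ∈ Set.Ioo (0 : ℝ) 1) (hα : α ∈ Set.Ioo (0 : ℝ) 1)
    (μ : FinPMF Ω4) (hμ : IsBinISAC p q l α μ) :
    μ.condH Y1rv (fun ω => (S1rv ω, Y2rv ω, S2rv ω))
      = (1 - α) * (1 - star l (star p q))
          * binEnt (p * star q l / (1 - star l (star p q))) := by
  obtain ⟨hp0, hp1⟩ := hp
  obtain ⟨hq0, hq1⟩ := hq
  obtain ⟨hl0, hl1⟩ := hl
  obtain ⟨hα0, hα1⟩ := hα
  set a0 : ℝ := (1-p)*((1-q)*(1-l)+q*l) with ha0def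
  set a1 : ℝ := p*(q*(1-l)+(1-q)*l) with ha1def
  set c : ℝ := 1-α with hcdef
  have key : μ.condH Y1rv (fun ω => (S1rv ω, Y2rv ω, S2rv ω)) =
      (c*(a0+a1)) * Real.log (c*(a0+a1))
      - (c*a0) * Real.log (c*a0) - (c*a1) * Real.log (c*a1) := by
    simp only [IsBinISAC] at hμ
    rw [FinPMF.condH]
    simp only [FinPMF.H, FinPMF.prob, Fintype.sum_prod_type, Fintype.sum_bool,
      Y1rv, S1rv, Y2rv, S2rv, Xrv, Arv, hμ]
    norm_num [PXA, PS, ha0def, ha1def, hcdef]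
    ring_nf
  rw [key]
  have h1p : (0:ℝ) < 1 - p := by linarith
  have h1q : (0:ℝ) < 1 - q := by linarith
  have h1l : (0:ℝ) < 1 - l := by linarith
  have hc : (0:ℝ) < c := by simp [hcdef]; linarith
  have ha0 : (0:ℝ) < a0 := by rw [ha0def]; positivity
  have ha1 : (0:ℝ) < a1 := by rw [ha1def]; positivity
  have hm : (0:ℝ) < a0 + a1 := by linarith
  have hsd : ∀ a b : ℝ, _root_.star a b = a*(1-b)+(1-a)*b := fun a b => rfl
  have hstar1 : 1 - _root_.star l (_root_.star p q) = a0 + a1 := by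
    rw [hsd, hsd, ha0def, ha1def]; ring
  have hstar2 : p * _root_.star q l = a1 := by rw [hsd, ha1def]
  rw [hstar1, hstar2, binEnt]
  have hrest : 1 - a1/(a0+a1) = a0/(a0+a1) := by field_simp; ring
  rw [hrest, Real.log_div ha1.ne' hm.ne', Real.log_div ha0.ne' hm.ne',
    Real.log_mul hc.ne' hm.ne', Real.log_mul hc.ne' ha0.ne', Real.log_mul hc.ne' ha1.ne']
  field_simp
  ring
end

section
/- In the binary ISAC setting with parameters p, q, λ, α ∈ (0,1), the conditional entropy of the legitimate state given all other variables satisfies H(S1 | Y1, Y2, S2, X, A) = (1−p)(1−q)(1−α+αλ) · H_b( λ / (1−α+αλ) ) + (1−p)q(1−αλ) · H_b( (1−λ) / (1−αλ) ). -/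
open scoped BigOperators Classical

lemma groupEnt (a b : ℝ) (ha : 0 < a) (hb : 0 < b) :
    (a + b) * binEnt (a / (a + b)) =
      -(a * Real.log a) - b * Real.log b + (a + b) * Real.log (a + b) := by
  have hab : (0:ℝ) < a + b := by linarith
  have h1 : 1 - a / (a + b) = b / (a + b) := by field_simp; ring
  rw [binEnt, h1, Real.log_div ha.ne' hab.ne', Real.log_div hb.ne' hab.ne']
  field_simp
  ring

set_option maxHeartbeats 2000000 in
/-- In the binary ISAC setting,
`H(S1 | Y1, Y2, S2, X, A) = (1−p)(1−q)(1−α+αλ) · H_b(λ/(1−α+αλ))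
  + (1−p)q(1−αλ) · H_b((1−λ)/(1−αλ))`. -/
theorem stmt_13 (p q l α : ℝ) (hp : p ∈ Set.Ioo (0 : ℝ) 1) (hq : q ∈ Set.Ioo (0 : ℝ) 1)
    (hl : l ∈ Set.Ioo (0 : ℝ) 1) (hα : α ∈ Set.Ioo (0 : ℝ) 1)
    (μ : FinPMF Ω4) (hμ : IsBinISAC p q l α μ) :
    μ.condH S1rv (fun ω => (Y1rv ω, Y2rv ω, S2rv ω, Xrv ω, Arv ω))
      = (1 - p) * (1 - q) * (1 - α + α * l) * binEnt (l / (1 - α + α * l))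
        + (1 - p) * q * (1 - α * l) * binEnt ((1 - l) / (1 - α * l)) := by
  simp only [IsBinISAC] at hμ
  simp only [FinPMF.condH, FinPMF.H, FinPMF.prob, Fintype.sum_prod_type, Fintype.sum_bool,
    S1rv, S2rv, Xrv, Arv, Y1rv, Y2rv, hμ, PXA, PS]
  norm_num
  obtain ⟨hp0, hp1⟩ := hp
  obtain ⟨hq0, hq1⟩ := hq
  obtain ⟨hl0, hl1⟩ := hl
  obtain ⟨ha0, ha1⟩ := hα
  have h1p : (0:ℝ) < 1 - p := by linarith
  have h1q : (0:ℝ) < 1 - q := by linarith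
  have h1l : (0:ℝ) < 1 - l := by linarith
  have h1a : (0:ℝ) < 1 - α := by linarith
  have hB2 : (0:ℝ) < (1-p)*(1-q)*l := mul_pos (mul_pos h1p h1q) hl0
  have hB1 : (0:ℝ) < (1-p)*(1-q)*((1-l)*(1-α)) := mul_pos (mul_pos h1p h1q) (mul_pos h1l h1a)
  have hA2 : (0:ℝ) < (1-p)*q*(1-l) := mul_pos (mul_pos h1p hq0) h1l
  have hA1 : (0:ℝ) < (1-p)*q*(l*(1-α)) := mul_pos (mul_pos h1p hq0) (mul_pos hl0 h1a)
  have hd1 : (0:ℝ) < 1 - α + α*l := by nlinarith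
  have hd2 : (0:ℝ) < 1 - α*l := by nlinarith
  have key1 : (1 - p) * (1 - q) * (1 - α + α * l) * binEnt (l / (1 - α + α * l)) =
      -(((1-p)*(1-q)*l) * Real.log ((1-p)*(1-q)*l))
      - ((1-p)*(1-q)*((1-l)*(1-α))) * Real.log ((1-p)*(1-q)*((1-l)*(1-α)))
      + ((1-p)*(1-q)*l + (1-p)*(1-q)*((1-l)*(1-α)))
        * Real.log ((1-p)*(1-q)*l + (1-p)*(1-q)*((1-l)*(1-α))) := by
    have h := groupEnt _ _ hB2 hB1
    rw [show l / (1 - α + α * l)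
        = ((1-p)*(1-q)*l) / ((1-p)*(1-q)*l + (1-p)*(1-q)*((1-l)*(1-α))) by
      rw [show (1-p)*(1-q)*l + (1-p)*(1-q)*((1-l)*(1-α)) = ((1-p)*(1-q))*(1 - α + α*l) by ring]
      rw [show (1-p)*(1-q)*l = ((1-p)*(1-q))*l by ring]
      rw [mul_div_mul_left _ _ (mul_pos h1p h1q).ne'],
      show (1 - p) * (1 - q) * (1 - α + α * l)
        = (1-p)*(1-q)*l + (1-p)*(1-q)*((1-l)*(1-α)) by ring]
    exact h
  have key2 : (1 - p) * q * (1 - α * l) * binEnt ((1 - l) / (1 - α * l)) =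
      -(((1-p)*q*(1-l)) * Real.log ((1-p)*q*(1-l)))
      - ((1-p)*q*(l*(1-α))) * Real.log ((1-p)*q*(l*(1-α)))
      + ((1-p)*q*(1-l) + (1-p)*q*(l*(1-α)))
        * Real.log ((1-p)*q*(1-l) + (1-p)*q*(l*(1-α))) := by
    have h := groupEnt _ _ hA2 hA1
    rw [show (1 - l) / (1 - α * l)
        = ((1-p)*q*(1-l)) / ((1-p)*q*(1-l) + (1-p)*q*(l*(1-α))) by
      rw [show (1-p)*q*(1-l) + (1-p)*q*(l*(1-α)) = ((1-p)*q)*(1 - α*l) by ring]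
      rw [show (1-p)*q*(1-l) = ((1-p)*q)*(1-l) by ring]
      rw [mul_div_mul_left _ _ (mul_pos h1p hq0).ne'],
      show (1 - p) * q * (1 - α * l)
        = (1-p)*q*(1-l) + (1-p)*q*(l*(1-α)) by ring]
    exact h
  rw [key1, key2]
  ring_nf
end

section
/- In the binary ISAC setting with parameters p, q, λ, α ∈ (0,1), the conditional entropy of the channel input and action given the legitimate receiver's observations satisfies H(X, A | Y1, S1) = −(1−p)(1−q)λ · log( (1−p)(1−q)λ / (λ∗p∗q) ) − (1−p)q(1−λ) · log( (1−p)q(1−λ) / (λ∗p∗q) ) − pqλ · log( pqλ / (λ∗p∗q) ) − p(1−q)(1−λ) · log( p(1−q)(1−λ) / (λ∗p∗q) ) + (1−p)(1−(q∗λ)) · H_b( qλ / (1−(q∗λ)) ) + p(q∗λ) · H_b( q(1−λ) / (q∗λ) ). -/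
open scoped BigOperators Classical

set_option maxHeartbeats 2000000 in
/-- In the binary ISAC setting,
`H(X, A | Y1, S1) = −(1−p)(1−q)λ log((1−p)(1−q)λ/(λ∗p∗q))
  − (1−p)q(1−λ) log((1−p)q(1−λ)/(λ∗p∗q)) − pqλ log(pqλ/(λ∗p∗q))
  − p(1−q)(1−λ) log(p(1−q)(1−λ)/(λ∗p∗q))
  + (1−p)(1−(q∗λ)) H_b(qλ/(1−(q∗λ))) + p(q∗λ) H_b(q(1−λ)/(q∗λ))`. -/
theorem stmt_14 (p q l α : ℝ) (hp : p ∈ Set.Ioo (0 : ℝ) 1) (hq : q ∈ Set.Ioo (0 : ℝ) 1)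
    (hl : l ∈ Set.Ioo (0 : ℝ) 1) (hα : α ∈ Set.Ioo (0 : ℝ) 1)
    (μ : FinPMF Ω4) (hμ : IsBinISAC p q l α μ) :
    μ.condH (fun ω => (Xrv ω, Arv ω)) (fun ω => (Y1rv ω, S1rv ω))
      = -((1 - p) * (1 - q) * l * Real.log ((1 - p) * (1 - q) * l / star l (star p q)))
        - (1 - p) * q * (1 - l) * Real.log ((1 - p) * q * (1 - l) / star l (star p q))
        - p * q * l * Real.log (p * q * l / star l (star p q))
        - p * (1 - q) * (1 - l) * Real.log (p * (1 - q) * (1 - l) / star l (star p q))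
        + (1 - p) * (1 - star q l) * binEnt (q * l / (1 - star q l))
        + p * star q l * binEnt (q * (1 - l) / star q l) := by
  simp only [IsBinISAC] at hμ
  have hP1 : μ.prob (fun ω => ((Xrv ω, Arv ω), (Y1rv ω, S1rv ω))) ((false, false), (false, false)) = (1 - p) * (1 - q) * l := by
    simp [FinPMF.prob, Fintype.sum_prod_type, Xrv, Arv, S1rv, Y1rv, hμ, PXA, PS]
    try ring
  have hP2 : μ.prob (fun ω => ((Xrv ω, Arv ω), (Y1rv ω, S1rv ω))) ((false, false), (false, true)) = (1 - p) * (1 - q) * (1 - l) := by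
    simp [FinPMF.prob, Fintype.sum_prod_type, Xrv, Arv, S1rv, Y1rv, hμ, PXA, PS]
    try ring
  have hP3 : μ.prob (fun ω => ((Xrv ω, Arv ω), (Y1rv ω, S1rv ω))) ((false, false), (true, false)) = 0 := by
    simp [FinPMF.prob, Fintype.sum_prod_type, Xrv, Arv, S1rv, Y1rv, hμ, PXA, PS]
    try ring
  have hP4 : μ.prob (fun ω => ((Xrv ω, Arv ω), (Y1rv ω, S1rv ω))) ((false, false), (true, true)) = 0 := by
    simp [FinPMF.prob, Fintype.sum_prod_type, Xrv, Arv, S1rv, Y1rv, hμ, PXA, PS]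
    try ring
  have hP5 : μ.prob (fun ω => ((Xrv ω, Arv ω), (Y1rv ω, S1rv ω))) ((false, true), (false, false)) = (1 - p) * q * (1 - l) := by
    simp [FinPMF.prob, Fintype.sum_prod_type, Xrv, Arv, S1rv, Y1rv, hμ, PXA, PS]
    try ring
  have hP6 : μ.prob (fun ω => ((Xrv ω, Arv ω), (Y1rv ω, S1rv ω))) ((false, true), (false, true)) = (1 - p) * q * l := by
    simp [FinPMF.prob, Fintype.sum_prod_type, Xrv, Arv, S1rv, Y1rv, hμ, PXA, PS]
    try ring
  have hP7 : μ.prob (fun ω => ((Xrv ω, Arv ω), (Y1rv ω, S1rv ω))) ((false, true), (true, false)) = 0 := by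
    simp [FinPMF.prob, Fintype.sum_prod_type, Xrv, Arv, S1rv, Y1rv, hμ, PXA, PS]
    try ring
  have hP8 : μ.prob (fun ω => ((Xrv ω, Arv ω), (Y1rv ω, S1rv ω))) ((false, true), (true, true)) = 0 := by
    simp [FinPMF.prob, Fintype.sum_prod_type, Xrv, Arv, S1rv, Y1rv, hμ, PXA, PS]
    try ring
  have hP9 : μ.prob (fun ω => ((Xrv ω, Arv ω), (Y1rv ω, S1rv ω))) ((true, false), (false, false)) = p * q * l := by
    simp [FinPMF.prob, Fintype.sum_prod_type, Xrv, Arv, S1rv, Y1rv, hμ, PXA, PS]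
    try ring
  have hP10 : μ.prob (fun ω => ((Xrv ω, Arv ω), (Y1rv ω, S1rv ω))) ((true, false), (false, true)) = 0 := by
    simp [FinPMF.prob, Fintype.sum_prod_type, Xrv, Arv, S1rv, Y1rv, hμ, PXA, PS]
    try ring
  have hP11 : μ.prob (fun ω => ((Xrv ω, Arv ω), (Y1rv ω, S1rv ω))) ((true, false), (true, false)) = 0 := by
    simp [FinPMF.prob, Fintype.sum_prod_type, Xrv, Arv, S1rv, Y1rv, hμ, PXA, PS]
    try ring
  have hP12 : μ.prob (fun ω => ((Xrv ω, Arv ω), (Y1rv ω, S1rv ω))) ((true, false), (true, true)) = p * q * (1 - l) := by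
    simp [FinPMF.prob, Fintype.sum_prod_type, Xrv, Arv, S1rv, Y1rv, hμ, PXA, PS]
    try ring
  have hP13 : μ.prob (fun ω => ((Xrv ω, Arv ω), (Y1rv ω, S1rv ω))) ((true, true), (false, false)) = p * (1 - q) * (1 - l) := by
    simp [FinPMF.prob, Fintype.sum_prod_type, Xrv, Arv, S1rv, Y1rv, hμ, PXA, PS]
    try ring
  have hP14 : μ.prob (fun ω => ((Xrv ω, Arv ω), (Y1rv ω, S1rv ω))) ((true, true), (false, true)) = 0 := by
    simp [FinPMF.prob, Fintype.sum_prod_type, Xrv, Arv, S1rv, Y1rv, hμ, PXA, PS]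
    try ring
  have hP15 : μ.prob (fun ω => ((Xrv ω, Arv ω), (Y1rv ω, S1rv ω))) ((true, true), (true, false)) = 0 := by
    simp [FinPMF.prob, Fintype.sum_prod_type, Xrv, Arv, S1rv, Y1rv, hμ, PXA, PS]
    try ring
  have hP16 : μ.prob (fun ω => ((Xrv ω, Arv ω), (Y1rv ω, S1rv ω))) ((true, true), (true, true)) = p * (1 - q) * l := by
    simp [FinPMF.prob, Fintype.sum_prod_type, Xrv, Arv, S1rv, Y1rv, hμ, PXA, PS]
    try ring
  have hQ1 : μ.prob (fun ω => (Y1rv ω, S1rv ω)) (false, false) = star l (star p q) := by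
    simp [FinPMF.prob, Fintype.sum_prod_type, Xrv, Arv, S1rv, Y1rv, hμ, PXA, PS, _root_.star]
    try ring
  have hQ2 : μ.prob (fun ω => (Y1rv ω, S1rv ω)) (false, true) = (1 - p) * (1 - star q l) := by
    simp [FinPMF.prob, Fintype.sum_prod_type, Xrv, Arv, S1rv, Y1rv, hμ, PXA, PS, _root_.star]
    try ring
  have hQ3 : μ.prob (fun ω => (Y1rv ω, S1rv ω)) (true, true) = p * star q l := by
    simp [FinPMF.prob, Fintype.sum_prod_type, Xrv, Arv, S1rv, Y1rv, hμ, PXA, PS, _root_.star]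
    try ring
  have hQ4 : μ.prob (fun ω => (Y1rv ω, S1rv ω)) (true, false) = 0 := by
    simp [FinPMF.prob, Fintype.sum_prod_type, Xrv, Arv, S1rv, Y1rv, hμ, PXA, PS, _root_.star]
    try ring
  simp only [FinPMF.condH, FinPMF.H, Fintype.sum_prod_type, Fintype.sum_bool, hP1, hP2, hP3, hP4, hP5, hP6, hP7, hP8, hP9, hP10, hP11, hP12, hP13, hP14, hP15, hP16, hQ1, hQ2, hQ3, hQ4]
  norm_num
  obtain ⟨hp0, hp1⟩ := hp
  obtain ⟨hq0, hq1⟩ := hq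
  obtain ⟨hl0, hl1⟩ := hl
  have h1p : (0:ℝ) < 1 - p := by linarith
  have h1q : (0:ℝ) < 1 - q := by linarith
  have h1l : (0:ℝ) < 1 - l := by linarith
  have hs0 : (0:ℝ) < _root_.star p q := by
    unfold _root_.star; nlinarith [mul_pos hp0 h1q, mul_pos h1p hq0]
  have hs1 : _root_.star p q < 1 := by
    unfold _root_.star; nlinarith [mul_pos hp0 hq0, mul_pos h1p h1q]
  have hB : (0:ℝ) < _root_.star q l := by
    unfold _root_.star; nlinarith [mul_pos hq0 h1l, mul_pos h1q hl0]
  have hA : (0:ℝ) < 1 - _root_.star q l := by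
    unfold _root_.star; nlinarith [mul_pos hq0 hl0, mul_pos h1q h1l]
  have hM : (0:ℝ) < _root_.star l (_root_.star p q) := by
    show (0:ℝ) < l * (1 - _root_.star p q) + (1 - l) * _root_.star p q
    have := mul_pos hl0 (by linarith : (0:ℝ) < 1 - _root_.star p q)
    have := mul_pos h1l hs0
    linarith
  have e1 : 1 - q * l / (1 - _root_.star q l) = (1 - q) * (1 - l) / (1 - _root_.star q l) := by
    rw [eq_div_iff hA.ne', sub_mul, div_mul_cancel₀ _ hA.ne']; unfold _root_.star; ring
  have e2 : 1 - q * (1 - l) / _root_.star q l = (1 - q) * l / _root_.star q l := by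
    rw [eq_div_iff hB.ne', sub_mul, div_mul_cancel₀ _ hB.ne']; unfold _root_.star; ring
  have L1 : Real.log ((1 - p) * (1 - q) * l) = Real.log (1 - p) + Real.log (1 - q) + Real.log l := by
    rw [Real.log_mul (mul_pos h1p h1q).ne' hl0.ne', Real.log_mul h1p.ne' h1q.ne']
  have L2 : Real.log ((1 - p) * (1 - q) * (1 - l)) = Real.log (1 - p) + Real.log (1 - q) + Real.log (1 - l) := by
    rw [Real.log_mul (mul_pos h1p h1q).ne' h1l.ne', Real.log_mul h1p.ne' h1q.ne']
  have L3 : Real.log ((1 - p) * q * (1 - l)) = Real.log (1 - p) + Real.log q + Real.log (1 - l) := by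
    rw [Real.log_mul (mul_pos h1p hq0).ne' h1l.ne', Real.log_mul h1p.ne' hq0.ne']
  have L4 : Real.log ((1 - p) * q * l) = Real.log (1 - p) + Real.log q + Real.log l := by
    rw [Real.log_mul (mul_pos h1p hq0).ne' hl0.ne', Real.log_mul h1p.ne' hq0.ne']
  have L5 : Real.log (p * q * l) = Real.log p + Real.log q + Real.log l := by
    rw [Real.log_mul (mul_pos hp0 hq0).ne' hl0.ne', Real.log_mul hp0.ne' hq0.ne']
  have L6 : Real.log (p * q * (1 - l)) = Real.log p + Real.log q + Real.log (1 - l) := by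
    rw [Real.log_mul (mul_pos hp0 hq0).ne' h1l.ne', Real.log_mul hp0.ne' hq0.ne']
  have L7 : Real.log (p * (1 - q) * (1 - l)) = Real.log p + Real.log (1 - q) + Real.log (1 - l) := by
    rw [Real.log_mul (mul_pos hp0 h1q).ne' h1l.ne', Real.log_mul hp0.ne' h1q.ne']
  have L8 : Real.log (p * (1 - q) * l) = Real.log p + Real.log (1 - q) + Real.log l := by
    rw [Real.log_mul (mul_pos hp0 h1q).ne' hl0.ne', Real.log_mul hp0.ne' h1q.ne']
  have L9 : Real.log ((1 - p) * (1 - _root_.star q l)) = Real.log (1 - p) + Real.log (1 - _root_.star q l) := Real.log_mul h1p.ne' hA.ne'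
  have L10 : Real.log (p * _root_.star q l) = Real.log p + Real.log (_root_.star q l) := Real.log_mul hp0.ne' hB.ne'
  have L11 : Real.log ((1 - p) * (1 - q) * l / _root_.star l (_root_.star p q)) = Real.log (1 - p) + Real.log (1 - q) + Real.log l - Real.log (_root_.star l (_root_.star p q)) := by
    rw [Real.log_div (mul_pos (mul_pos h1p h1q) hl0).ne' hM.ne', L1]
  have L12 : Real.log ((1 - p) * q * (1 - l) / _root_.star l (_root_.star p q)) = Real.log (1 - p) + Real.log q + Real.log (1 - l) - Real.log (_root_.star l (_root_.star p q)) := by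
    rw [Real.log_div (mul_pos (mul_pos h1p hq0) h1l).ne' hM.ne', L3]
  have L13 : Real.log (p * q * l / _root_.star l (_root_.star p q)) = Real.log p + Real.log q + Real.log l - Real.log (_root_.star l (_root_.star p q)) := by
    rw [Real.log_div (mul_pos (mul_pos hp0 hq0) hl0).ne' hM.ne', L5]
  have L14 : Real.log (p * (1 - q) * (1 - l) / _root_.star l (_root_.star p q)) = Real.log p + Real.log (1 - q) + Real.log (1 - l) - Real.log (_root_.star l (_root_.star p q)) := by
    rw [Real.log_div (mul_pos (mul_pos hp0 h1q) h1l).ne' hM.ne', L7]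
  have L15 : Real.log (q * l / (1 - _root_.star q l)) = Real.log q + Real.log l - Real.log (1 - _root_.star q l) := by
    rw [Real.log_div (mul_pos hq0 hl0).ne' hA.ne', Real.log_mul hq0.ne' hl0.ne']
  have L16 : Real.log ((1 - q) * (1 - l) / (1 - _root_.star q l)) = Real.log (1 - q) + Real.log (1 - l) - Real.log (1 - _root_.star q l) := by
    rw [Real.log_div (mul_pos h1q h1l).ne' hA.ne', Real.log_mul h1q.ne' h1l.ne']
  have L17 : Real.log (q * (1 - l) / _root_.star q l) = Real.log q + Real.log (1 - l) - Real.log (_root_.star q l) := by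
    rw [Real.log_div (mul_pos hq0 h1l).ne' hB.ne', Real.log_mul hq0.ne' h1l.ne']
  have L18 : Real.log ((1 - q) * l / _root_.star q l) = Real.log (1 - q) + Real.log l - Real.log (_root_.star q l) := by
    rw [Real.log_div (mul_pos h1q hl0).ne' hB.ne', Real.log_mul h1q.ne' hl0.ne']
  have LM : Real.log (_root_.star l (_root_.star p q)) = Real.log (_root_.star l (_root_.star p q)) := rfl
  have f1 : (1 - p) * (1 - _root_.star q l) * binEnt (q * l / (1 - _root_.star q l)) =
      -((1 - p) * q * l * (Real.log q + Real.log l - Real.log (1 - _root_.star q l)))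
      - (1 - p) * (1 - q) * (1 - l) * (Real.log (1 - q) + Real.log (1 - l) - Real.log (1 - _root_.star q l)) := by
    simp only [binEnt]
    rw [e1, L15, L16]
    have h : (1 - _root_.star q l) ≠ 0 := hA.ne'
    field_simp
  have f2 : p * _root_.star q l * binEnt (q * (1 - l) / _root_.star q l) =
      -(p * q * (1 - l) * (Real.log q + Real.log (1 - l) - Real.log (_root_.star q l)))
      - p * (1 - q) * l * (Real.log (1 - q) + Real.log l - Real.log (_root_.star q l)) := by
    simp only [binEnt]
    rw [e2, L17, L18]
    have h : (_root_.star q l) ≠ 0 := hB.ne'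
    field_simp
  rw [f1, f2, L1, L2, L3, L4, L5, L6, L7, L8, L9, L10, L11, L12, L13, L14]
  unfold _root_.star
  ring
end
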